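/- In a 2-connected unbalanced signed graph Σ, for every edge e there exists a negative cycle through e, and also there exist two cycles through e of opposite signs, unless every cycle through e is negative. -/

import Mathlib

/-!
Call `x` balanced if every cycle through `x` is positive. Let `C` be a cycle through `x` avoiding
the edge `xy`. By 2-connectivity there is a path from `y` to `C` avoiding `x`; prefixed by `xy` it
is an ear of `C`, and closing the ear with either arc of `C` gives two cycles through `xy` whose
signs multiply to the sign of `C`. So if every cycle through `xy` is positive, `x` is balanced;
applied to the edges of a walk, the same argument carries balance to every vertex, so the whole
graph is balanced.
-/

open SimpleGraph
variable {V : Type*}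

/-- A signed graph `(G, σ)` is balanced: every cycle has sign `+1`. -/
def SBalanced (G : SimpleGraph V) (σ : Sym2 V → ℤˣ) : Prop :=
  ∀ (u : V) (w : G.Walk u u), w.IsCycle → (w.edges.map σ).prod = 1

namespace SimpleGraph.Walk

variable {G : SimpleGraph V} {σ : Sym2 V → ℤˣ} {c u v w x y : V}

def sign (σ : Sym2 V → ℤˣ) (p : G.Walk u v) : ℤˣ := (p.edges.map σ).prod

@[simp] lemma sign_append (p : G.Walk u v) (q : G.Walk v w) :
    (p.append q).sign σ = p.sign σ * q.sign σ := by
  simp [sign, edges_append]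

@[simp] lemma sign_reverse (p : G.Walk u v) : p.reverse.sign σ = p.sign σ := by
  simp [sign, edges_reverse, List.prod_reverse]

lemma sign_rotate [DecidableEq V] (c : G.Walk v v) (h : u ∈ c.support) :
    (c.rotate u h).sign σ = c.sign σ :=
  ((c.rotate_edges u h).perm.map σ).prod_eq

lemma IsPath.isCycle_append_of_disjoint_edges {p : G.Walk u v} {q : G.Walk v u}
    (hp : p.IsPath) (hq : q.IsPath) (huv : u ≠ v)
    (hs : p.support.tail.Disjoint q.support.tail) (he : p.edges.Disjoint q.edges) :
    (p.append q).IsCycle := by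
  refine hp.isCycle_append hq hs ?_
  by_contra! hlen
  cases p with
  | nil => exact huv rfl
  | cons _ p =>
    cases q with
    | nil => exact huv rfl
    | cons _ q =>
      cases p with
      | cons => simp at hlen
      | nil =>
        cases q with
        | cons => simp at hlen
        | nil => simp [Sym2.eq_swap] at he

lemma IsPath.isCycle_append_of_subset {C : G.Walk c c} {R : G.Walk x w} {S : G.Walk w x}
    (hR : R.IsPath) (hS : S.IsPath) (hxw : x ≠ w)
    (hRC : ∀ v ∈ R.support.tail, v ∈ C.support → v = w) (hRe : R.edges.Disjoint C.edges)
    (hSC : S.support ⊆ C.support) (hSe : S.edges ⊆ C.edges) : (R.append S).IsCycle := by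
  refine hR.isCycle_append_of_disjoint_edges hS hxw (fun v hvR hvS => ?_)
    (List.disjoint_of_subset_right hSe hRe)
  obtain rfl := hRC v hvR (hSC (List.mem_of_mem_tail hvS))
  have := hS.support_nodup
  rw [← S.cons_tail_support, List.nodup_cons] at this
  exact this.1 hvS

lemma IsCycle.exists_isCycle_mul_sign_eq {C : G.Walk x x} (hC : C.IsCycle) (hw : w ∈ C.support)
    (hxw : x ≠ w) {R : G.Walk x w} (hR : R.IsPath)
    (hRC : ∀ v ∈ R.support.tail, v ∈ C.support → v = w) (hRe : R.edges.Disjoint C.edges) :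
    ∃ D₁ D₂ : G.Walk x x, D₁.IsCycle ∧ D₂.IsCycle ∧ R.edges ⊆ D₁.edges ∧ R.edges ⊆ D₂.edges ∧
      D₁.sign σ * D₂.sign σ = C.sign σ := by
  classical
  set A := C.takeUntil w hw
  set B := C.dropUntil w hw
  have hAB : A.append B = C := C.take_spec hw
  have hA : A.IsPath := hC.isPath_takeUntil hw
  have hB : B.IsPath :=
    (hAB ▸ hC : (A.append B).IsCycle).isPath_of_append_right (not_nil_of_ne hxw)
  refine ⟨R.append B, R.append A.reverse, ?_, ?_, ?_, ?_, ?_⟩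
  · exact hR.isCycle_append_of_subset hB hxw hRC hRe (C.support_dropUntil_subset_support hw)
      (C.edges_dropUntil_subset_edges hw)
  · refine hR.isCycle_append_of_subset hA.reverse hxw hRC hRe ?_ ?_
    · simpa using C.support_takeUntil_subset_support hw
    · simpa using C.edges_takeUntil_subset_edges hw
  · simp [edges_append]
  · simp [edges_append]
  · rw [← hAB, sign_append, sign_append, sign_append, sign_reverse, mul_mul_mul_comm,
      Int.units_mul_self, one_mul, mul_comm]

lemma exists_walk_notMem_support_of_connected_deleteVerts {z a b : V}
    (h : ((⊤ : G.Subgraph).deleteVerts {z}).Connected) (ha : a ≠ z) (hb : b ≠ z) :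
    ∃ p : G.Walk a b, z ∉ p.support := by
  obtain ⟨p, hp⟩ := (Subgraph.preconnected_iff_forall_exists_walk_subgraph _).mp
    h.preconnected (u := a) (v := b) (by simp [ha]) (by simp [hb])
  refine ⟨p, fun hz => ?_⟩
  simpa using Subgraph.verts_mono hp ((mem_verts_toSubgraph p).mpr hz)

lemma IsCycle.exists_isCycle_mem_edges_mul_sign_eq
    (h2 : ∀ v : V, ((⊤ : G.Subgraph).deleteVerts {v}).Connected) {C : G.Walk x x}
    (hC : C.IsCycle) (hxy : G.Adj x y) (he : s(x, y) ∉ C.edges) :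
    ∃ D₁ D₂ : G.Walk x x, D₁.IsCycle ∧ D₂.IsCycle ∧ s(x, y) ∈ D₁.edges ∧ s(x, y) ∈ D₂.edges ∧
      D₁.sign σ * D₂.sign σ = C.sign σ := by
  classical
  have hsnd : G.Adj x C.snd := C.adj_snd hC.not_nil
  obtain ⟨P, hxP⟩ := exists_walk_notMem_support_of_connected_deleteVerts (h2 x) hxy.ne' hsnd.ne'
  obtain ⟨w, hwC, hwP, hfirst⟩ := P.exists_mem_support_forall_mem_support_imp_eq
    C.support.toFinset ⟨C.snd, by simp [C.getVert_mem_support 1]⟩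
  -- the ear `cons hxy Q` runs from `x` through `y` to the first vertex `w` of `P` on `C`
  set Q := (P.takeUntil w hwP).bypass
  have hQ : ∀ v ∈ Q.support, v ∈ C.support → v = w := fun v hv hvC =>
    hfirst v (by simpa using hvC) (support_bypass_subset_support _ hv)
  have hxQ : x ∉ Q.support := fun h =>
    hxP (support_takeUntil_subset_support _ _ (support_bypass_subset_support _ h))
  have hxw : x ≠ w := fun h => hxQ (h ▸ Q.end_mem_support)
  have hR : (cons hxy Q).IsPath := (cons_isPath_iff _ _).mpr ⟨bypass_isPath _, hxQ⟩
  have hRe : (cons hxy Q).edges.Disjoint C.edges := by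
    rw [edges_cons, List.disjoint_cons_left]
    refine ⟨he, fun e heQ heC => ?_⟩
    induction e using Sym2.ind with
    | _ a b =>
      have ha := hQ a (Q.fst_mem_support_of_mem_edges heQ) (C.fst_mem_support_of_mem_edges heC)
      have hb := hQ b (Q.snd_mem_support_of_mem_edges heQ) (C.snd_mem_support_of_mem_edges heC)
      exact (Q.adj_of_mem_edges heQ).ne (ha.trans hb.symm)
  obtain ⟨D₁, D₂, hD₁, hD₂, hRD₁, hRD₂, hsign⟩ :=
    hC.exists_isCycle_mul_sign_eq (σ := σ) (by simpa using hwC) hxw hR hQ hRe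
  exact ⟨D₁, D₂, hD₁, hD₂, hRD₁ (by simp), hRD₂ (by simp), hsign⟩

end SimpleGraph.Walk

open SimpleGraph.Walk

def SBalancedAt (G : SimpleGraph V) (σ : Sym2 V → ℤˣ) (v : V) : Prop :=
  ∀ c : G.Walk v v, c.IsCycle → c.sign σ = 1

section

variable {G : SimpleGraph V} {σ : Sym2 V → ℤˣ} {u v x y : V}

lemma SBalancedAt.sign_eq_one (h : SBalancedAt G σ v) {c : G.Walk u u} (hc : c.IsCycle)
    (hv : v ∈ c.support) : c.sign σ = 1 := by
  classical
  rw [← sign_rotate c hv]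
  exact h _ (hc.rotate hv)

lemma sBalancedAt_of_forall_mem_edges
    (h2 : ∀ v : V, ((⊤ : G.Subgraph).deleteVerts {v}).Connected) (hxy : G.Adj x y)
    (h : ∀ c : G.Walk x x, c.IsCycle → s(x, y) ∈ c.edges → c.sign σ = 1) :
    SBalancedAt G σ x := by
  intro C hC
  by_cases he : s(x, y) ∈ C.edges
  · exact h C hC he
  · obtain ⟨D₁, D₂, hD₁, hD₂, he₁, he₂, hsign⟩ :=
      hC.exists_isCycle_mem_edges_mul_sign_eq h2 hxy he
    rw [← hsign, h D₁ hD₁ he₁, h D₂ hD₂ he₂, one_mul]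

lemma SBalancedAt.of_adj
    (h2 : ∀ v : V, ((⊤ : G.Subgraph).deleteVerts {v}).Connected)
    (hy : SBalancedAt G σ y) (hxy : G.Adj x y) : SBalancedAt G σ x :=
  sBalancedAt_of_forall_mem_edges h2 hxy fun _ hc he =>
    hy.sign_eq_one hc (snd_mem_support_of_mem_edges _ he)

lemma SBalancedAt.of_reachable
    (h2 : ∀ v : V, ((⊤ : G.Subgraph).deleteVerts {v}).Connected)
    (hy : SBalancedAt G σ y) (hxy : G.Reachable x y) : SBalancedAt G σ x := by
  obtain ⟨p⟩ := hxy
  induction p with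
  | nil => exact hy
  | cons h _ ih => exact (ih hy).of_adj h2 h

lemma sBalanced_of_forall_mem_edges (hconn : G.Connected)
    (h2 : ∀ v : V, ((⊤ : G.Subgraph).deleteVerts {v}).Connected)
    (hxy : G.Adj x y) (h : ∀ c : G.Walk x x, c.IsCycle → s(x, y) ∈ c.edges → c.sign σ = 1) :
    SBalanced G σ := fun u =>
  (sBalancedAt_of_forall_mem_edges h2 hxy h).of_reachable h2 (hconn.preconnected u x)

end

theorem stmt_14_general (G : SimpleGraph V) (σ : Sym2 V → ℤˣ)
    (hconn : G.Connected)
    (h2 : ∀ v : V, ((⊤ : G.Subgraph).deleteVerts {v}).Connected)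
    (hunb : ¬ SBalanced G σ) :
    ∀ e ∈ G.edgeSet,
      (∃ (u : V) (w : G.Walk u u), w.IsCycle ∧ e ∈ w.edges ∧
        (w.edges.map σ).prod = -1) ∧
      ((∃ (u₁ u₂ : V) (w₁ : G.Walk u₁ u₁) (w₂ : G.Walk u₂ u₂),
          w₁.IsCycle ∧ w₂.IsCycle ∧ e ∈ w₁.edges ∧ e ∈ w₂.edges ∧
          (w₁.edges.map σ).prod = 1 ∧ (w₂.edges.map σ).prod = -1) ∨
        (∀ (u : V) (w : G.Walk u u), w.IsCycle → e ∈ w.edges →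
          (w.edges.map σ).prod = -1)) := by
  intro e he
  induction e using Sym2.ind with | _ x y => ?_
  have hneg : ∃ (u : V) (w : G.Walk u u), w.IsCycle ∧ s(x, y) ∈ w.edges ∧
      (w.edges.map σ).prod = -1 := by
    by_contra! hpos
    exact hunb (sBalanced_of_forall_mem_edges hconn h2 he fun c hc hxy =>
      (Int.units_eq_one_or _).resolve_right (hpos x c hc hxy))
  refine ⟨hneg, or_iff_not_imp_right.mpr fun hall => ?_⟩
  push Not at hall
  obtain ⟨u₁, w₁, hw₁, he₁, hs₁⟩ := hall
  obtain ⟨u₂, w₂, hw₂, he₂, hs₂⟩ := hneg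
  exact ⟨u₁, u₂, w₁, w₂, hw₁, hw₂, he₁, he₂, (Int.units_eq_one_or _).resolve_right hs₁, hs₂⟩

/-- In a 2-connected unbalanced signed graph, every edge lies on a negative cycle;
moreover there are two cycles of opposite signs through the edge unless every cycle
through it is negative. -/
theorem stmt_14 [Fintype V] (G : SimpleGraph V) (σ : Sym2 V → ℤˣ)
    (hcard : 3 ≤ Fintype.card V) (hconn : G.Connected)
    (h2 : ∀ v : V, ((⊤ : G.Subgraph).deleteVerts {v}).Connected)
    (hunb : ¬ SBalanced G σ) :
    ∀ e ∈ G.edgeSet,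
      (∃ (u : V) (w : G.Walk u u), w.IsCycle ∧ e ∈ w.edges ∧
        (w.edges.map σ).prod = -1) ∧
      ((∃ (u₁ u₂ : V) (w₁ : G.Walk u₁ u₁) (w₂ : G.Walk u₂ u₂),
          w₁.IsCycle ∧ w₂.IsCycle ∧ e ∈ w₁.edges ∧ e ∈ w₂.edges ∧
          (w₁.edges.map σ).prod = 1 ∧ (w₂.edges.map σ).prod = -1) ∨
        (∀ (u : V) (w : G.Walk u u), w.IsCycle → e ∈ w.edges →
          (w.edges.map σ).prod = -1)) :=
  stmt_14_general G σ hconn h2 hunb
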